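/- arXiv:2007.15844 — 2 statements merged into one kernel-verified Lean document; each statement's English description precedes it below -/
import Mathlib

section
/- Let η be a Poisson process on a measurable space X with σ-finite intensity measure λ, and let u = ∑_{i=1}^n a_i 1_{B_i} be a simple integrable complex-valued function with the B_i pairwise disjoint and of finite λ-measure. Then E(e^{η(u)}) = exp(∫ (e^{u(x)} − 1) dλ(x)). -/
open MeasureTheory
open ProbabilityTheory

lemma my_tsum_poisson (t : ℝ) :
    ∑' k : ℕ, t ^ k * Real.exp (-t) / k.factorial = 1 := by
  have h1 : (fun k : ℕ => t ^ k * Real.exp (-t) / k.factorial)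
      = fun k : ℕ => (t ^ k / k.factorial) * Real.exp (-t) := by ext k; ring
  rw [h1, tsum_mul_right]
  have h2 : ∑' k : ℕ, t ^ k / (k.factorial : ℝ) = Real.exp t := by
    rw [Real.exp_eq_exp_ℝ, NormedSpace.exp_eq_tsum_div]
  rw [h2, ← Real.exp_add]
  simp

lemma my_summable_poisson (t : ℝ) :
    Summable (fun k : ℕ => t ^ k * Real.exp (-t) / k.factorial) := by
  have := (Real.summable_pow_div_factorial t).mul_right (Real.exp (-t))
  refine this.congr fun k => ?_
  ring

lemma my_top_null {Ω : Type*} [MeasurableSpace Ω] {P : Measure Ω} [IsProbabilityMeasure P]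
    {M : Ω → ℕ∞} (hM : Measurable M) {t : ℝ} (ht : 0 ≤ t)
    (hpmf : ∀ k : ℕ, P {ω | M ω = (k : ℕ∞)}
      = ENNReal.ofReal (t ^ k * Real.exp (-t) / k.factorial)) :
    P {ω | M ω = ⊤} = 0 := by
  have hSmeas : ∀ k : ℕ, MeasurableSet {ω | M ω = (k : ℕ∞)} := by
    intro k
    exact hM (measurableSet_singleton _)
  have hdisj : Pairwise (Function.onFun Disjoint (fun k : ℕ => {ω | M ω = (k : ℕ∞)})) := by
    intro k l hkl
    refine Set.disjoint_left.mpr fun ω hk hl => ?_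
    exact hkl (by exact_mod_cast hk.symm.trans hl)
  have hU : P (⋃ k : ℕ, {ω | M ω = (k : ℕ∞)}) = 1 := by
    rw [measure_iUnion hdisj hSmeas]
    simp_rw [hpmf]
    rw [← ENNReal.ofReal_tsum_of_nonneg (fun k => by positivity) (my_summable_poisson t),
      my_tsum_poisson t, ENNReal.ofReal_one]
  have hcompl : {ω | M ω = ⊤} = (⋃ k : ℕ, {ω | M ω = (k : ℕ∞)})ᶜ := by
    ext ω
    simp only [Set.mem_setOf_eq, Set.mem_compl_iff, Set.mem_iUnion]
    constructor
    · rintro h ⟨k, hk⟩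
      rw [h] at hk
      exact (ENat.top_ne_coe k) hk
    · intro h
      by_contra hne
      obtain ⟨k, hk⟩ := WithTop.ne_top_iff_exists.mp hne
      exact h ⟨k, hk.symm⟩
  rw [hcompl, measure_compl (MeasurableSet.iUnion hSmeas) (by simp), hU, measure_univ,
    tsub_self]

lemma myIndepFun.integral_mul_complex {Ω : Type*} [MeasurableSpace Ω] {μ : Measure Ω}
    {X Y : Ω → ℂ} (h : IndepFun X Y μ) (hX : Integrable X μ) (hY : Integrable Y μ) :
    ∫ ω, X ω * Y ω ∂μ = (∫ ω, X ω ∂μ) * ∫ ω, Y ω ∂μ := by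
  have hXY : Integrable (fun ω => X ω * Y ω) μ := h.integrable_mul hX hY
  have hXr : Integrable (fun ω => (X ω).re) μ := hX.re
  have hXi : Integrable (fun ω => (X ω).im) μ := hX.im
  have hYr : Integrable (fun ω => (Y ω).re) μ := hY.re
  have hYi : Integrable (fun ω => (Y ω).im) μ := hY.im
  have hrr : IndepFun (fun ω => (X ω).re) (fun ω => (Y ω).re) μ :=
    h.comp Complex.measurable_re Complex.measurable_re
  have hri : IndepFun (fun ω => (X ω).re) (fun ω => (Y ω).im) μ :=
    h.comp Complex.measurable_re Complex.measurable_im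
  have hir : IndepFun (fun ω => (X ω).im) (fun ω => (Y ω).re) μ :=
    h.comp Complex.measurable_im Complex.measurable_re
  have hii : IndepFun (fun ω => (X ω).im) (fun ω => (Y ω).im) μ :=
    h.comp Complex.measurable_im Complex.measurable_im
  have irr : ∫ ω, (X ω).re * (Y ω).re ∂μ = (∫ ω, (X ω).re ∂μ) * ∫ ω, (Y ω).re ∂μ :=
    hrr.integral_fun_mul_eq_mul_integral hXr.1 hYr.1
  have iri : ∫ ω, (X ω).re * (Y ω).im ∂μ = (∫ ω, (X ω).re ∂μ) * ∫ ω, (Y ω).im ∂μ :=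
    hri.integral_fun_mul_eq_mul_integral hXr.1 hYi.1
  have iir : ∫ ω, (X ω).im * (Y ω).re ∂μ = (∫ ω, (X ω).im ∂μ) * ∫ ω, (Y ω).re ∂μ :=
    hir.integral_fun_mul_eq_mul_integral hXi.1 hYr.1
  have iii : ∫ ω, (X ω).im * (Y ω).im ∂μ = (∫ ω, (X ω).im ∂μ) * ∫ ω, (Y ω).im ∂μ :=
    hii.integral_fun_mul_eq_mul_integral hXi.1 hYi.1
  have mrr : Integrable (fun ω => (X ω).re * (Y ω).re) μ := hrr.integrable_mul hXr hYr
  have mri : Integrable (fun ω => (X ω).re * (Y ω).im) μ := hri.integrable_mul hXr hYi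
  have mir : Integrable (fun ω => (X ω).im * (Y ω).re) μ := hir.integrable_mul hXi hYr
  have mii : Integrable (fun ω => (X ω).im * (Y ω).im) μ := hii.integrable_mul hXi hYi
  apply Complex.ext
  · have := integral_re hXY
    rw [RCLike.re_to_complex] at this
    rw [← this]
    simp only [Complex.mul_re, RCLike.re_to_complex]
    rw [integral_sub mrr mii, irr, iii]
    simp only [← RCLike.re_to_complex, ← RCLike.im_to_complex]
    rw [integral_re hX, integral_re hY, integral_im hX, integral_im hY]
  · have := integral_im hXY
    rw [RCLike.im_to_complex] at this
    rw [← this]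
    simp only [Complex.mul_im, RCLike.im_to_complex]
    rw [integral_add mri mir, iri, iir]
    simp only [← RCLike.re_to_complex, ← RCLike.im_to_complex]
    rw [integral_re hX, integral_re hY, integral_im hX, integral_im hY]

lemma my_integral_prod_complex {Ω ι : Type*} [MeasurableSpace Ω] {μ : Measure Ω}
    [IsProbabilityMeasure μ] {G : ι → Ω → ℂ} (hmeas : ∀ i, Measurable (G i))
    (hint : ∀ i, Integrable (G i) μ)
    (hind : iIndepFun G μ) (s : Finset ι) :
    Integrable (fun ω => ∏ i ∈ s, G i ω) μ ∧
      ∫ ω, ∏ i ∈ s, G i ω ∂μ = ∏ i ∈ s, ∫ ω, G i ω ∂μ := by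
  classical
  induction s using Finset.induction with
  | empty => simp
  | @insert i s hi ih =>
    have hpind : IndepFun (G i) (∏ j ∈ s, G j) μ :=
      (hind.indepFun_finsetProd_of_notMem hmeas hi).symm
    have hps : Integrable (fun ω => ∏ j ∈ s, G j ω) μ := ih.1
    have heq : (∏ j ∈ s, G j) = fun ω => ∏ j ∈ s, G j ω := by
      ext ω; simp [Finset.prod_apply]
    have hps' : Integrable (∏ j ∈ s, G j) μ := by rw [heq]; exact hps
    have hmul : Integrable (fun ω => G i ω * ∏ j ∈ s, G j ω) μ := by
      have := hpind.integrable_mul (hint i) hps'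
      have heq2 : (G i * ∏ j ∈ s, G j) = fun ω => G i ω * ∏ j ∈ s, G j ω := by
        ext ω; simp [Finset.prod_apply]
      rwa [heq2] at this
    constructor
    · simpa [Finset.prod_insert hi] using hmul
    · have hpind' : IndepFun (G i) (fun ω => ∏ j ∈ s, G j ω) μ := by rwa [heq] at hpind
      simp only [Finset.prod_insert hi]
      rw [myIndepFun.integral_mul_complex hpind' (hint i) hps, ih.2]

lemma my_poisson_exp {Ω : Type*} [MeasurableSpace Ω] {P : Measure Ω} [IsProbabilityMeasure P]
    {N : Ω → ℕ} (hN : Measurable N) {t : ℝ} (ht : 0 ≤ t)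
    (hpmf : ∀ k : ℕ, P {ω | N ω = k}
      = ENNReal.ofReal (t ^ k * Real.exp (-t) / k.factorial)) (c : ℂ) :
    Integrable (fun ω => Complex.exp (c * N ω)) P ∧
      ∫ ω, Complex.exp (c * N ω) ∂P = Complex.exp (t * (Complex.exp c - 1)) := by
  classical
  set f : ℕ → ℂ := fun k => Complex.exp (c * k) with hf
  set μ' := P.map N with hμ'
  have hμ'k : ∀ k : ℕ, μ' {k} = ENNReal.ofReal (t ^ k * Real.exp (-t) / k.factorial) := by
    intro k
    rw [hμ', Measure.map_apply hN (measurableSet_singleton k)]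
    have : N ⁻¹' {k} = {ω | N ω = k} := by ext ω; simp
    rw [this, hpmf]
  have hfm : Measurable f := measurable_from_top
  have hfsm : StronglyMeasurable f := hfm.stronglyMeasurable
  set r : ℝ := Real.exp c.re with hr
  have hr0 : 0 ≤ r := (Real.exp_pos _).le
  have hnorm : ∀ k : ℕ, ‖f k‖ = r ^ k := by
    intro k
    rw [hf]
    simp only [Complex.norm_exp]
    have : (c * (k : ℂ)).re = (k : ℕ) * c.re := by simp [Complex.mul_re]; ring
    rw [this, Real.exp_nat_mul]
  have hpmf_nonneg : ∀ k : ℕ, 0 ≤ t ^ k * Real.exp (-t) / k.factorial := by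
    intro k; positivity
  have hsum1 : Summable (fun k : ℕ => r ^ k * (t ^ k * Real.exp (-t) / k.factorial)) := by
    have := (Real.summable_pow_div_factorial (r * t)).mul_right (Real.exp (-t))
    refine this.congr fun k => ?_
    rw [mul_pow]; ring
  have hInt : Integrable f μ' := by
    refine ⟨hfsm.aestronglyMeasurable, ?_⟩
    have : (∫⁻ k, ‖f k‖ₑ ∂μ') = ∑' k : ℕ, ‖f k‖ₑ * μ' {k} :=
      lintegral_countable' _
    rw [HasFiniteIntegral, this]
    have key : ∀ k : ℕ, ‖f k‖ₑ * μ' {k}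
        = ENNReal.ofReal (r ^ k * (t ^ k * Real.exp (-t) / k.factorial)) := by
      intro k
      rw [hμ'k, ← ofReal_norm, ← ENNReal.ofReal_mul (norm_nonneg _), hnorm]
    simp_rw [key]
    rw [← ENNReal.ofReal_tsum_of_nonneg (fun k => by positivity) hsum1]
    exact ENNReal.ofReal_lt_top
  have hIntP : Integrable (fun ω => Complex.exp (c * N ω)) P := by
    have := (integrable_map_measure hfsm.aestronglyMeasurable hN.aemeasurable).mp hInt
    simpa [Function.comp_def, hf] using this
  refine ⟨hIntP, ?_⟩
  have hmap : ∫ ω, Complex.exp (c * N ω) ∂P = ∫ k, f k ∂μ' := by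
    rw [hμ', integral_map hN.aemeasurable hfsm.aestronglyMeasurable]
  rw [hmap, integral_countable' hInt]
  have hterm : ∀ k : ℕ, μ'.real {k} • f k
      = ((t : ℂ) * Complex.exp c) ^ k / (k.factorial : ℂ) * Complex.exp (-(t : ℂ)) := by
    intro k
    rw [measureReal_def, hμ'k, ENNReal.toReal_ofReal (hpmf_nonneg k)]
    have hfk : f k = Complex.exp c ^ k := by
      show Complex.exp (c * k) = _
      rw [mul_comm, Complex.exp_nat_mul]
    rw [hfk, Complex.real_smul]
    push_cast
    rw [mul_pow]
    have hk0 : (k.factorial : ℂ) ≠ 0 := by exact_mod_cast Nat.factorial_ne_zero k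
    field_simp
  rw [tsum_congr hterm, tsum_mul_right]
  have hexp : ∑' k : ℕ, ((t : ℂ) * Complex.exp c) ^ k / (k.factorial : ℂ)
      = Complex.exp ((t : ℂ) * Complex.exp c) := by
    rw [Complex.exp_eq_exp_ℂ, NormedSpace.exp_eq_tsum_div]
  rw [hexp, ← Complex.exp_add]
  congr 1
  ring


/-- A Poisson process on a measurable space `X` with (σ-finite) intensity measure `lam`,
realized on an underlying probability space `(Ω, P)`.  It is a random `ℕ ∪ {∞}`-valued
measure `η` such that each `η B` is Poisson distributed with parameter `lam B` (for `B` of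
finite measure) and such that counts on pairwise disjoint sets are independent. -/
structure PoissonProcess (X : Type*) [MeasurableSpace X] (lam : Measure X)
    (Ω : Type*) [MeasurableSpace Ω] (P : Measure Ω) where
  η : Set X → Ω → ℕ∞
  measurable_count : ∀ B : Set X, MeasurableSet B → Measurable (η B)
  empty : ∀ ω, η ∅ ω = 0
  countably_additive : ∀ (ω : Ω) (B : ℕ → Set X), Pairwise (Function.onFun Disjoint B) →
    η (⋃ n, B n) ω = ∑' n, η (B n) ω
  poisson : ∀ B : Set X, MeasurableSet B → lam B < ⊤ → ∀ k : ℕ,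
    P {ω | η B ω = (k : ℕ∞)} =
      ENNReal.ofReal ((lam B).toReal ^ k * Real.exp (-(lam B).toReal) / Nat.factorial k)
  indep : ∀ (n : ℕ) (B : Fin n → Set X), (∀ i, MeasurableSet (B i)) →
    Pairwise (Function.onFun Disjoint B) →
    ProbabilityTheory.iIndepFun (fun i => η (B i)) P

/-- Lemma 2.1: if `η` is a Poisson process with intensity `lam` and
`u = ∑ aᵢ 1_{Bᵢ}` is a simple integrable complex function with the `Bᵢ` pairwise disjoint
of finite measure, then `E (e^{η(u)}) = exp (∫ (e^{u x} - 1) dlam x)`. -/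
theorem expectation_exp_poissonProcess_simpleFunc
    {X : Type*} [MeasurableSpace X] (lam : Measure X) [SigmaFinite lam]
    {Ω : Type*} [MeasurableSpace Ω] (P : Measure Ω) [IsProbabilityMeasure P]
    (pp : PoissonProcess X lam Ω P)
    (n : ℕ) (a : Fin n → ℂ) (B : Fin n → Set X)
    (hBmeas : ∀ i, MeasurableSet (B i)) (hBfin : ∀ i, lam (B i) < ⊤)
    (hBdisj : Pairwise (Function.onFun Disjoint B))
    (u : X → ℂ) (hu : ∀ x, u x = ∑ i, Set.indicator (B i) (fun _ => a i) x) :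
    ∫ ω, Complex.exp (∑ i, a i * ((pp.η (B i) ω).toNat : ℂ)) ∂P
      = Complex.exp (∫ x, (Complex.exp (u x) - 1) ∂lam) := by
  classical
  set t : Fin n → ℝ := fun i => (lam (B i)).toReal with hT
  have ht0 : ∀ i, 0 ≤ t i := fun i => ENNReal.toReal_nonneg
  set N : Fin n → Ω → ℕ := fun i ω => (pp.η (B i) ω).toNat with hNdef
  have hηmeas : ∀ i, Measurable (pp.η (B i)) := fun i => pp.measurable_count _ (hBmeas i)
  have hNmeas : ∀ i, Measurable (N i) := fun i =>
    (measurable_from_top (f := ENat.toNat)).comp (hηmeas i)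
  -- P(η = ⊤) = 0
  have htopnull : ∀ i, P {ω | pp.η (B i) ω = ⊤} = 0 := fun i =>
    my_top_null (hηmeas i) (ht0 i) (fun k => pp.poisson _ (hBmeas i) (hBfin i) k)
  -- pmf of N i
  have hNpmf : ∀ i, ∀ k : ℕ, P {ω | N i ω = k}
      = ENNReal.ofReal ((t i) ^ k * Real.exp (-(t i)) / k.factorial) := by
    intro i k
    rcases Nat.eq_zero_or_pos k with hk | hk
    · subst hk
      have hset : {ω | N i ω = 0}
          = {ω | pp.η (B i) ω = ((0 : ℕ) : ℕ∞)} ∪ {ω | pp.η (B i) ω = ⊤} := by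
        ext ω
        simp [hNdef, ENat.toNat_eq_zero]
      have hPU : P ({ω | pp.η (B i) ω = ((0 : ℕ) : ℕ∞)} ∪ {ω | pp.η (B i) ω = ⊤})
          = P {ω | pp.η (B i) ω = ((0 : ℕ) : ℕ∞)} := by
        refine le_antisymm ?_ (measure_mono Set.subset_union_left)
        calc P ({ω | pp.η (B i) ω = ((0 : ℕ) : ℕ∞)} ∪ {ω | pp.η (B i) ω = ⊤})
            ≤ P {ω | pp.η (B i) ω = ((0 : ℕ) : ℕ∞)} + P {ω | pp.η (B i) ω = ⊤} :=
              measure_union_le _ _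
          _ = P {ω | pp.η (B i) ω = ((0 : ℕ) : ℕ∞)} := by rw [htopnull i, add_zero]
      rw [hset, hPU, pp.poisson _ (hBmeas i) (hBfin i) 0]
    · have hset : {ω | N i ω = k} = {ω | pp.η (B i) ω = (k : ℕ∞)} := by
        ext ω
        simp only [hNdef, Set.mem_setOf_eq]
        exact ENat.toNat_eq_iff (Nat.pos_iff_ne_zero.mp hk)
      rw [hset, pp.poisson _ (hBmeas i) (hBfin i) k]
  -- the factors
  set G : Fin n → Ω → ℂ := fun i ω => Complex.exp (a i * (N i ω : ℂ)) with hGdef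
  have hGsingle : ∀ i, Integrable (G i) P ∧
      ∫ ω, G i ω ∂P = Complex.exp ((t i) * (Complex.exp (a i) - 1)) := fun i =>
    my_poisson_exp (hNmeas i) (ht0 i) (hNpmf i) (a i)
  have hGmeas : ∀ i, Measurable (G i) := by
    intro i
    exact Complex.measurable_exp.comp
      (measurable_const.mul ((measurable_from_top (f := (Nat.cast : ℕ → ℂ))).comp (hNmeas i)))
  have hGind : iIndepFun G P := by
    have hbase := pp.indep n B hBmeas hBdisj
    have := hbase.comp (fun i (m : ℕ∞) => Complex.exp (a i * (m.toNat : ℂ)))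
      (fun i => measurable_from_top)
    exact this
  -- LHS as a product
  have hlhs : ∀ ω, Complex.exp (∑ i, a i * ((pp.η (B i) ω).toNat : ℂ)) = ∏ i, G i ω := by
    intro ω
    rw [Complex.exp_sum]
  have hprod := my_integral_prod_complex hGmeas (fun i => (hGsingle i).1) hGind Finset.univ
  have hLHS : ∫ ω, Complex.exp (∑ i, a i * ((pp.η (B i) ω).toNat : ℂ)) ∂P
      = ∏ i, Complex.exp ((t i) * (Complex.exp (a i) - 1)) := by
    calc ∫ ω, Complex.exp (∑ i, a i * ((pp.η (B i) ω).toNat : ℂ)) ∂P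
        = ∫ ω, ∏ i, G i ω ∂P := by simp_rw [hlhs]
      _ = ∏ i, ∫ ω, G i ω ∂P := hprod.2
      _ = ∏ i, Complex.exp ((t i) * (Complex.exp (a i) - 1)) := by
          exact Finset.prod_congr rfl fun i _ => (hGsingle i).2
  -- RHS integral
  have hfun : (fun x => Complex.exp (u x) - 1)
      = fun x => ∑ i, Set.indicator (B i) (fun _ => Complex.exp (a i) - 1) x := by
    ext x
    by_cases hx : ∃ j, x ∈ B j
    · obtain ⟨j, hj⟩ := hx
      have hother : ∀ i, i ≠ j → x ∉ B i := by
        intro i hij hxi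
        exact Set.disjoint_left.mp (hBdisj hij) hxi hj
      have hux : u x = a j := by
        rw [hu]
        rw [Finset.sum_eq_single j]
        · rw [Set.indicator_of_mem hj]
        · intro i _ hij
          rw [Set.indicator_of_notMem (hother i hij)]
        · intro h; exact absurd (Finset.mem_univ j) h
      have hsum : ∑ i, Set.indicator (B i) (fun _ => Complex.exp (a i) - 1) x
          = Complex.exp (a j) - 1 := by
        rw [Finset.sum_eq_single j]
        · rw [Set.indicator_of_mem hj]
        · intro i _ hij
          rw [Set.indicator_of_notMem (hother i hij)]
        · intro h; exact absurd (Finset.mem_univ j) h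
      rw [hux, hsum]
    · push_neg at hx
      have hux : u x = 0 := by
        rw [hu]
        refine Finset.sum_eq_zero fun i _ => ?_
        rw [Set.indicator_of_notMem (hx i)]
      have hsum : ∑ i, Set.indicator (B i) (fun _ => Complex.exp (a i) - 1) x = 0 := by
        refine Finset.sum_eq_zero fun i _ => ?_
        rw [Set.indicator_of_notMem (hx i)]
      rw [hux, hsum, Complex.exp_zero, sub_self]
  have hindint : ∀ i, Integrable
      (fun x => Set.indicator (B i) (fun _ => Complex.exp (a i) - 1) x) lam := by
    intro i
    rw [integrable_indicator_iff (hBmeas i)]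
    exact integrableOn_const (hBfin i).ne
  have hRHSint : ∫ x, (Complex.exp (u x) - 1) ∂lam
      = ∑ i, (t i) • (Complex.exp (a i) - 1) := by
    rw [hfun, integral_finset_sum _ (fun i _ => hindint i)]
    refine Finset.sum_congr rfl fun i _ => ?_
    rw [integral_indicator_const _ (hBmeas i)]
    rfl
  rw [hLHS, hRHSint, ← Complex.exp_sum]
  simp [Complex.real_smul]
end

section
/- Let ν be a Lévy measure on (0,∞) with ∫ (r ∧ 1) dν(r) < ∞, and suppose additionally that the functions r ↦ 1 − e^{−cr}, c > 0, lie in L²((0,∞), ν). Then the linear span of {r ↦ 1 − e^{−cr} : c > 0} is dense in L²((0,∞), ν). -/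
open MeasureTheory Filter
open scoped ENNReal NNReal

namespace SpanExpAux

noncomputable section

abbrev Om : Type := ↥(Set.Ioi (0 : ℝ))

/-- The map `r ↦ e^{-r}` from `(0,∞)` to `ℝ`. -/
def φ (r : Om) : ℝ := Real.exp (-(r : ℝ))

lemma φ_mem (r : Om) : φ r ∈ Set.Icc (0 : ℝ) 1 :=
  ⟨(Real.exp_pos _).le, Real.exp_le_one_iff.mpr (neg_nonpos.mpr (le_of_lt r.2))⟩

lemma φ_cont : Continuous φ := Real.continuous_exp.comp continuous_subtype_val.neg

lemma φ_meas : Measurable φ := φ_cont.measurable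

lemma φ_inj : Function.Injective φ := fun a b h =>
  Subtype.ext (neg_inj.mp (Real.exp_injective h))

lemma φ_abs_le_one (r : Om) (n : ℕ) : ‖(φ r) ^ n‖ ≤ 1 := by
  rw [norm_pow, Real.norm_eq_abs]
  rw [abs_of_pos (show (0:ℝ) < φ r from Real.exp_pos _)]
  exact pow_le_one₀ (Real.exp_pos _).le (φ_mem r).2

variable {ν : Measure Om} [SigmaFinite ν] {H : Om → ℝ}

lemma integrable_cm_mul (hm : Measurable H) (hi : Integrable H ν)
    (F : C(Set.Icc (0 : ℝ) 1, ℝ)) :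
    Integrable (fun r => F ⟨φ r, φ_mem r⟩ * H r) ν := by
  refine hi.bdd_mul ?_ (Eventually.of_forall fun r => F.norm_coe_le_norm _)
  exact (F.continuous.comp (φ_cont.subtype_mk φ_mem)).measurable.aestronglyMeasurable

/-- Laplace-type uniqueness: if all "moments" of `H dν` against `e^{-nr}` vanish,
then `H = 0` a.e. -/
theorem ae_zero_of_moments (hm : Measurable H) (hi : Integrable H ν)
    (hmom : ∀ n : ℕ, ∫ r, (φ r) ^ n * H r ∂ν = 0) :
    H =ᵐ[ν] 0 := by
  -- Step 1: polynomials
  have hpoly : ∀ p : Polynomial ℝ, ∫ r, p.eval (φ r) * H r ∂ν = 0 := by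
    intro p
    have hint : ∀ i : ℕ, Integrable (fun r => (φ r) ^ i * H r) ν := fun i =>
      hi.bdd_mul ((φ_cont.pow i).measurable.aestronglyMeasurable)
        (Eventually.of_forall fun r => φ_abs_le_one r i)
    have heq : ∀ r : Om, p.eval (φ r) * H r =
        ∑ i ∈ Finset.range (p.natDegree + 1), p.coeff i * ((φ r) ^ i * H r) := by
      intro r
      rw [Polynomial.eval_eq_sum_range, Finset.sum_mul]
      exact Finset.sum_congr rfl fun i _ => by ring
    rw [integral_congr_ae (Eventually.of_forall heq),
      integral_finset_sum _ (fun i _ => (hint i).const_mul _)]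
    refine Finset.sum_eq_zero fun i _ => ?_
    rw [integral_const_mul, hmom i, mul_zero]
  -- Step 2: continuous functions on [0,1]
  have hcont : ∀ F : C(Set.Icc (0 : ℝ) 1, ℝ), ∫ r, F ⟨φ r, φ_mem r⟩ * H r ∂ν = 0 := by
    intro F
    set X := ∫ r, F ⟨φ r, φ_mem r⟩ * H r ∂ν with hX
    have key : ∀ ε : ℝ, 0 < ε → |X| ≤ ε * ∫ r, |H r| ∂ν := by
      intro ε hε
      obtain ⟨p, hp⟩ := exists_polynomial_near_continuousMap 0 1 F ε hε
      set G : C(Set.Icc (0 : ℝ) 1, ℝ) := p.toContinuousMapOn _ - F with hG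
      have hXeq : X = -∫ r, G ⟨φ r, φ_mem r⟩ * H r ∂ν := by
        have hsub : ∀ r : Om, G ⟨φ r, φ_mem r⟩ * H r =
            p.eval (φ r) * H r - F ⟨φ r, φ_mem r⟩ * H r := by
          intro r
          simp only [hG, ContinuousMap.sub_apply, Polynomial.toContinuousMapOn_apply,
            Polynomial.toContinuousMap_apply]
          ring
        rw [integral_congr_ae (Eventually.of_forall hsub),
          integral_sub ((integrable_cm_mul hm hi (p.toContinuousMapOn _)).congr
            (Eventually.of_forall fun r => by
              simp [Polynomial.toContinuousMapOn_apply, Polynomial.toContinuousMap_apply]))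
            (integrable_cm_mul hm hi F), hpoly p]
        simp [hX]
      rw [hXeq, abs_neg]
      calc |∫ r, G ⟨φ r, φ_mem r⟩ * H r ∂ν| ≤ ∫ r, |G ⟨φ r, φ_mem r⟩ * H r| ∂ν := by
            exact norm_integral_le_integral_norm (μ := ν) fun r : Om => G ⟨φ r, φ_mem r⟩ * H r
        _ ≤ ∫ r, ε * |H r| ∂ν := by
            refine integral_mono_ae (integrable_cm_mul hm hi G).norm (hi.abs.const_mul ε)
              (Eventually.of_forall fun r => ?_)
            dsimp only
            rw [abs_mul]
            have := (G.norm_coe_le_norm ⟨φ r, φ_mem r⟩).trans hp.le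
            rw [Real.norm_eq_abs] at this
            exact mul_le_mul_of_nonneg_right this (abs_nonneg _)
        _ = ε * ∫ r, |H r| ∂ν := integral_const_mul ε _
    have hXabs : |X| ≤ 0 := by
      set C := ∫ r, |H r| ∂ν with hC
      have hC0 : 0 ≤ C := integral_nonneg fun r => abs_nonneg _
      refine le_of_forall_pos_le_add fun ε hε => ?_
      have h1 : |X| ≤ (ε / (C + 1)) * C := key _ (by positivity)
      have h2 : (ε / (C + 1)) * C ≤ ε := by
        rw [div_mul_eq_mul_div, div_le_iff₀ (by linarith)]
        nlinarith
      linarith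
    have : X = 0 := abs_eq_zero.mp (le_antisymm hXabs (abs_nonneg _))
    exact this
  -- Step 3: equal pushforward measures on ℝ
  classical
  set dp : Om → ℝ≥0∞ := fun r => ENNReal.ofReal (H r) with hdp
  set dm : Om → ℝ≥0∞ := fun r => ENNReal.ofReal (-H r) with hdm
  have hdpm : Measurable dp := ENNReal.measurable_ofReal.comp hm
  have hdmm : Measurable dm := ENNReal.measurable_ofReal.comp hm.neg
  haveI finp : IsFiniteMeasure (ν.withDensity dp) := isFiniteMeasure_withDensity_ofReal hi.2
  haveI finm : IsFiniteMeasure (ν.withDensity dm) := isFiniteMeasure_withDensity_ofReal hi.neg.2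
  haveI : PolishSpace Om := IsOpen.polishSpace isOpen_Ioi
  have hemb : MeasurableEmbedding φ := φ_cont.measurableEmbedding φ_inj
  have hofReal : ∀ (x : ℝ) (a : ℝ≥0),
      ENNReal.ofReal x * (a : ℝ≥0∞) = ENNReal.ofReal ((a : ℝ) * max x 0) := by
    intro x a
    rw [ENNReal.ofReal_mul a.coe_nonneg, ← ENNReal.ofReal_coe_nnreal, mul_comm]
    congr 1
    rcases le_total x 0 with h | h
    · simp [max_eq_right h, ENNReal.ofReal_eq_zero.mpr h]
    · rw [max_eq_left h]
  have hmap : (ν.withDensity dp).map φ = (ν.withDensity dm).map φ := by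
    apply MeasureTheory.ext_of_forall_lintegral_eq_of_IsFiniteMeasure
    intro f
    have hfm : Measurable fun x : ℝ => ((f x : ℝ≥0) : ℝ≥0∞) :=
      measurable_coe_nnreal_ennreal.comp f.continuous.measurable
    have hfφ_cont : Continuous fun r : Om => ((f (φ r) : ℝ≥0) : ℝ) :=
      NNReal.continuous_coe.comp (f.continuous.comp φ_cont)
    obtain ⟨C, hC⟩ := f.bounded
    have hbound : ∀ r : Om, ‖((f (φ r) : ℝ≥0) : ℝ)‖ ≤ C + ((f 0 : ℝ≥0) : ℝ) := by
      intro r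
      rw [Real.norm_eq_abs, abs_of_nonneg (f (φ r)).coe_nonneg]
      have h1 := hC (φ r) 0
      rw [NNReal.dist_eq] at h1
      have h2 := (abs_le.mp h1).2
      linarith
    have hIp : Integrable (fun r => ((f (φ r) : ℝ≥0) : ℝ) * max (H r) 0) ν :=
      hi.pos_part.bdd_mul hfφ_cont.measurable.aestronglyMeasurable (Eventually.of_forall hbound)
    have hIm : Integrable (fun r => ((f (φ r) : ℝ≥0) : ℝ) * max (-H r) 0) ν :=
      hi.neg.pos_part.bdd_mul hfφ_cont.measurable.aestronglyMeasurable (Eventually.of_forall hbound)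
    have hFz : ∫ r, ((f (φ r) : ℝ≥0) : ℝ) * H r ∂ν = 0 := by
      exact hcont ⟨fun x => ((f (x : ℝ) : ℝ≥0) : ℝ),
        NNReal.continuous_coe.comp (f.continuous.comp continuous_subtype_val)⟩
    have hPM : ∫ r, ((f (φ r) : ℝ≥0) : ℝ) * max (H r) 0 ∂ν
        = ∫ r, ((f (φ r) : ℝ≥0) : ℝ) * max (-H r) 0 ∂ν := by
      have h0 : ∫ r, (((f (φ r) : ℝ≥0) : ℝ) * max (H r) 0
          - ((f (φ r) : ℝ≥0) : ℝ) * max (-H r) 0) ∂ν = 0 := by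
        rw [integral_congr_ae (Eventually.of_forall fun r => ?_)]
        · exact hFz
        · rw [← mul_sub, max_zero_sub_max_neg_zero_eq_self]
      rw [integral_sub hIp hIm] at h0
      linarith
    have hnnp : 0 ≤ᵐ[ν] fun r => ((f (φ r) : ℝ≥0) : ℝ) * max (H r) 0 :=
      Eventually.of_forall fun r => mul_nonneg (f (φ r)).coe_nonneg (le_max_right _ _)
    have hnnm : 0 ≤ᵐ[ν] fun r => ((f (φ r) : ℝ≥0) : ℝ) * max (-H r) 0 :=
      Eventually.of_forall fun r => mul_nonneg (f (φ r)).coe_nonneg (le_max_right _ _)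
    calc ∫⁻ x, f x ∂((ν.withDensity dp).map φ)
        = ∫⁻ r, ((f (φ r) : ℝ≥0) : ℝ≥0∞) ∂(ν.withDensity dp) :=
          lintegral_map hfm φ_meas
      _ = ∫⁻ r, (dp * fun r => ((f (φ r) : ℝ≥0) : ℝ≥0∞)) r ∂ν :=
          lintegral_withDensity_eq_lintegral_mul ν hdpm (hfm.comp φ_meas)
      _ = ∫⁻ r, ENNReal.ofReal (((f (φ r) : ℝ≥0) : ℝ) * max (H r) 0) ∂ν := by
          refine lintegral_congr fun r => ?_
          simp only [Pi.mul_apply, hdp]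
          exact hofReal _ _
      _ = ENNReal.ofReal (∫ r, ((f (φ r) : ℝ≥0) : ℝ) * max (H r) 0 ∂ν) :=
          (ofReal_integral_eq_lintegral_ofReal hIp hnnp).symm
      _ = ENNReal.ofReal (∫ r, ((f (φ r) : ℝ≥0) : ℝ) * max (-H r) 0 ∂ν) := by rw [hPM]
      _ = ∫⁻ r, ENNReal.ofReal (((f (φ r) : ℝ≥0) : ℝ) * max (-H r) 0) ∂ν :=
          ofReal_integral_eq_lintegral_ofReal hIm hnnm
      _ = ∫⁻ r, (dm * fun r => ((f (φ r) : ℝ≥0) : ℝ≥0∞)) r ∂ν := by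
          refine lintegral_congr fun r => ?_
          simp only [Pi.mul_apply, hdm]
          exact (hofReal _ _).symm
      _ = ∫⁻ r, ((f (φ r) : ℝ≥0) : ℝ≥0∞) ∂(ν.withDensity dm) :=
          (lintegral_withDensity_eq_lintegral_mul ν hdmm (hfm.comp φ_meas)).symm
      _ = ∫⁻ x, f x ∂((ν.withDensity dm).map φ) := (lintegral_map hfm φ_meas).symm
  have hwd : ν.withDensity dp = ν.withDensity dm := by
    ext S hS
    have h1 := congrArg (fun m : Measure ℝ => m (φ '' S)) hmap
    simpa [hemb.map_apply, Set.preimage_image_eq _ φ_inj] using h1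
  have hfin : ∫⁻ r, dp r ∂ν ≠ ∞ := by
    have h1 := measure_lt_top (ν.withDensity dp) Set.univ
    rw [withDensity_apply _ MeasurableSet.univ, setLIntegral_univ] at h1
    exact h1.ne
  have hae : dp =ᵐ[ν] dm :=
    (withDensity_eq_iff hdpm.aemeasurable hdmm.aemeasurable hfin).mp hwd
  filter_upwards [hae] with r hr
  simp only [hdp, hdm] at hr
  rcases lt_trichotomy (H r) 0 with h | h | h
  · exfalso
    rw [ENNReal.ofReal_eq_zero.mpr h.le] at hr
    exact (ENNReal.ofReal_pos.mpr (by linarith)).ne' hr.symm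
  · exact h
  · exfalso
    rw [ENNReal.ofReal_eq_zero.mpr (by linarith : -H r ≤ 0)] at hr
    exact (ENNReal.ofReal_pos.mpr h).ne' hr

end

end SpanExpAux

open SpanExpAux

/-- Let `ν` be a Lévy measure on `(0, ∞)` (so `∫ (r ∧ 1) dν(r) < ∞`) and suppose the
functions `r ↦ 1 - e^{-c r}`, `c > 0`, lie in `L²((0, ∞), ν)`.  Then their linear span is
dense in `L²((0, ∞), ν)`. -/
theorem span_one_sub_exp_dense_in_L2
    (ν : Measure ↥(Set.Ioi (0 : ℝ))) [SigmaFinite ν]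
    (hlevy : ∫⁻ r : ↥(Set.Ioi (0 : ℝ)), ENNReal.ofReal (min (r : ℝ) 1) ∂ν < ⊤)
    (hL2 : ∀ c : ℝ, 0 < c →
      MemLp (fun r : ↥(Set.Ioi (0 : ℝ)) => 1 - Real.exp (-(c * (r : ℝ)))) 2 ν) :
    Dense ((Submodule.span ℝ
        {g : Lp ℝ 2 ν | ∃ c : ℝ, 0 < c ∧
          (g : ↥(Set.Ioi (0 : ℝ)) → ℝ) =ᵐ[ν]
            fun r => 1 - Real.exp (-(c * (r : ℝ)))} : Submodule ℝ (Lp ℝ 2 ν)) :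
      Set (Lp ℝ 2 ν)) := by
  set S : Set (Lp ℝ 2 ν) := {g : Lp ℝ 2 ν | ∃ c : ℝ, 0 < c ∧
      (g : Om → ℝ) =ᵐ[ν] fun r => 1 - Real.exp (-(c * (r : ℝ)))} with hS
  have hbot : (Submodule.span ℝ S)ᗮ = ⊥ := by
    rw [Submodule.eq_bot_iff]
    intro g hg
    -- measurable representative of g
    have hsm := (Lp.memLp g).aestronglyMeasurable
    set h : Om → ℝ := hsm.mk _ with hh
    have hgm : (g : Om → ℝ) =ᵐ[ν] h := hsm.ae_eq_mk
    have hmeas : Measurable h := hsm.stronglyMeasurable_mk.measurable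
    -- orthogonality relations
    have horth : ∀ c : ℝ, 0 < c →
        Integrable (fun r : Om => (1 - Real.exp (-(c * (r : ℝ)))) * h r) ν ∧
        ∫ r : Om, (1 - Real.exp (-(c * (r : ℝ)))) * h r ∂ν = 0 := by
      intro c hc
      set fc : Lp ℝ 2 ν := (hL2 c hc).toLp _ with hfc
      have hfcS : fc ∈ S := ⟨c, hc, (hL2 c hc).coeFn_toLp⟩
      have hzero : inner (𝕜 := ℝ) fc g = 0 :=
        (Submodule.mem_orthogonal _ g).mp hg fc (Submodule.subset_span hfcS)
      have hinner := MeasureTheory.L2.inner_def (𝕜 := ℝ) fc g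
      have hint0 : Integrable (fun r : Om => (fc : Om → ℝ) r * (g : Om → ℝ) r) ν := by
        have := MeasureTheory.L2.integrable_inner (𝕜 := ℝ) fc g
        simpa [RCLike.inner_apply, starRingEnd_apply, star_trivial, mul_comm] using this
      have hae : (fun r : Om => (fc : Om → ℝ) r * (g : Om → ℝ) r) =ᵐ[ν]
          (fun r : Om => (1 - Real.exp (-(c * (r : ℝ)))) * h r) := by
        filter_upwards [(hL2 c hc).coeFn_toLp, hgm] with r h1 h2
        rw [h1, h2]
      have hz2 : ∫ r : Om, (fc : Om → ℝ) r * (g : Om → ℝ) r ∂ν = 0 :=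
        calc ∫ r : Om, (fc : Om → ℝ) r * (g : Om → ℝ) r ∂ν
            = ∫ a : Om, inner (𝕜 := ℝ) ((fc : Om → ℝ) a) ((g : Om → ℝ) a) ∂ν :=
              integral_congr_ae (Eventually.of_forall fun a => by
                simp [RCLike.inner_apply, starRingEnd_apply, star_trivial, mul_comm])
          _ = inner (𝕜 := ℝ) fc g := hinner.symm
          _ = 0 := hzero
      exact ⟨hint0.congr hae, by rw [← integral_congr_ae hae]; exact hz2⟩
    -- the integrable density H
    set H : Om → ℝ := fun r => (1 - Real.exp (-(1 * (r : ℝ)))) * h r with hH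
    have hmeasH : Measurable H := by
      apply Measurable.mul ?_ hmeas
      exact (continuous_const.sub (Real.continuous_exp.comp
        ((continuous_const.mul continuous_subtype_val).neg))).measurable
    have hiH : Integrable H ν := (horth 1 one_pos).1
    -- Laplace transform of H vanishes
    have key : ∀ c : ℝ, 0 < c → ∫ r : Om, Real.exp (-(c * (r : ℝ))) * H r ∂ν = 0 := by
      intro c hc
      have hpt : ∀ r : Om, Real.exp (-(c * (r : ℝ))) * H r =
          (1 - Real.exp (-((c + 1) * (r : ℝ)))) * h r
            - (1 - Real.exp (-(c * (r : ℝ)))) * h r := by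
        intro r
        have hexp : Real.exp (-(c * (r : ℝ))) * Real.exp (-(1 * (r : ℝ)))
            = Real.exp (-((c + 1) * (r : ℝ))) := by
          rw [← Real.exp_add]; ring_nf
        calc Real.exp (-(c * (r : ℝ))) * H r
            = (Real.exp (-(c * (r : ℝ)))
              - Real.exp (-(c * (r : ℝ))) * Real.exp (-(1 * (r : ℝ)))) * h r := by
              rw [hH]; ring
          _ = _ := by rw [hexp]; ring
      rw [integral_congr_ae (Eventually.of_forall hpt),
        integral_sub (horth (c + 1) (by linarith)).1 (horth c hc).1,
        (horth (c + 1) (by linarith)).2, (horth c hc).2, sub_zero]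
    -- the zeroth moment, by dominated convergence
    have mom0 : ∫ r : Om, H r ∂ν = 0 := by
      have hlim : Filter.Tendsto
          (fun n : ℕ => ∫ r : Om, Real.exp (-((1 / (n + 1 : ℝ)) * (r : ℝ))) * H r ∂ν)
          Filter.atTop (nhds (∫ r : Om, H r ∂ν)) := by
        apply tendsto_integral_of_dominated_convergence (fun r => |H r|)
        · intro n
          exact ((Real.continuous_exp.comp
            ((continuous_const.mul continuous_subtype_val).neg)).measurable.mul
            hmeasH).aestronglyMeasurable
        · exact hiH.abs
        · intro n
          filter_upwards with r
          rw [Real.norm_eq_abs, abs_mul, abs_of_pos (Real.exp_pos _)]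
          refine mul_le_of_le_one_left (abs_nonneg _) (Real.exp_le_one_iff.mpr ?_)
          have hr0 : (0 : ℝ) < r := r.2
          have : (0 : ℝ) ≤ (1 / (n + 1 : ℝ)) * (r : ℝ) := by positivity
          linarith
        · filter_upwards with r
          have h3 : Filter.Tendsto (fun n : ℕ => -((1 / (n + 1 : ℝ)) * (r : ℝ)))
              Filter.atTop (nhds 0) := by
            simpa using (tendsto_one_div_add_atTop_nhds_zero_nat.mul_const (r : ℝ)).neg
          have h2 : Filter.Tendsto (fun n : ℕ => Real.exp (-((1 / (n + 1 : ℝ)) * (r : ℝ))))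
              Filter.atTop (nhds 1) := by
            simpa [Function.comp_def] using (Real.continuous_exp.tendsto 0).comp h3
          simpa using h2.mul_const (H r)
      have hz : ∀ n : ℕ, ∫ r : Om, Real.exp (-((1 / (n + 1 : ℝ)) * (r : ℝ))) * H r ∂ν = 0 :=
        fun n => key _ (by positivity)
      simp only [hz] at hlim
      exact tendsto_nhds_unique hlim tendsto_const_nhds
    -- all moments vanish
    have hmom : ∀ n : ℕ, ∫ r : Om, (φ r) ^ n * H r ∂ν = 0 := by
      intro n
      cases n with
      | zero => simpa using mom0
      | succ m =>
        have hrw : ∀ r : Om, (φ r) ^ (m + 1) = Real.exp (-(((m : ℝ) + 1) * (r : ℝ))) := by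
          intro r
          rw [φ, ← Real.exp_nat_mul]
          congr 1
          push_cast
          ring
        rw [integral_congr_ae (Eventually.of_forall fun r => by rw [hrw r])]
        exact key _ (by positivity)
    have hHzero : H =ᵐ[ν] 0 := ae_zero_of_moments hmeasH hiH hmom
    have hhzero : h =ᵐ[ν] 0 := by
      filter_upwards [hHzero] with r hr
      have hfac : 0 < 1 - Real.exp (-(1 * (r : ℝ))) := by
        have hr0 : (0 : ℝ) < r := r.2
        have : Real.exp (-(1 * (r : ℝ))) < 1 := Real.exp_lt_one_iff.mpr (by linarith)
        linarith
      simp only [hH, Pi.zero_apply] at hr ⊢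
      rcases mul_eq_zero.mp hr with h1 | h1
      · exact absurd h1 hfac.ne'
      · exact h1
    exact Lp.eq_zero_iff_ae_eq_zero.mpr (hgm.trans hhzero)
  have htop := Submodule.topologicalClosure_eq_top_iff.mpr hbot
  rw [dense_iff_closure_eq, ← Submodule.topologicalClosure_coe, htop, Submodule.top_coe]
end
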